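/- With S1000(N) = (3^N - 1)/2, and S909, S727, S636 defined by the recurrences S909(N+1) = S727(N) + 2*S1000(N) + 1; S727(N+1) = S909(N) + 2*S909(N-1) + 2*S1000(N-1) + 3; S636(N+1) = S636(N) + 2*S909(N-1) + 2*S1000(N-1) + 3 (with initial values S909(1)=S727(1)=S636(1)=1, S727(2)=S636(2)=4), define S606 by S606(1)=1, S606(2)=4, and S606(N+1) = S636(N) + S636(N-1) + S909(N-1) + 2*S1000(N-1) + 3 for N ≥ 2. Then S606(N)/S1000(N) tends to 20/33 as N → ∞. -/

import Mathlib

/-!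
Since `2 * S1000 N + 3 = 3 ^ N + 2`, eliminating `S727` leaves linear recurrences for `S909`,
`S636`, `S606` driven by `3 ^ N`. Each sequence is `c * 3 ^ N` plus an error, with `c = 5/11, 7/22,
10/33` forced by the recurrence; the error of `S909` solves `e (n + 3) = e (n + 1) + 2 * e n`, and
the other errors are built from it by sums, so all errors are `O(2 ^ N)`. After division by `3 ^ N`
they vanish, and the ratio tends to `(10/33) / (1/2) = 20/33`.
-/

open Filter Topology

lemma cast_three_pow_sub_one_div_two (N : ℕ) :
    (((3 ^ N - 1) / 2 : ℕ) : ℝ) = (3 ^ N - 1) / 2 := by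
  have hdvd : 2 ∣ 3 ^ N - 1 := (Nat.Odd.sub_odd (Odd.pow (by decide)) odd_one).two_dvd
  rw [Nat.cast_div_charZero hdvd, Nat.cast_sub (Nat.one_le_pow _ _ (by norm_num))]
  push_cast
  ring

lemma abs_le_two_pow_of_recurrence {e : ℕ → ℝ} (hrec : ∀ n, e (n + 3) = e (n + 1) + 2 * e n)
    (h0 : |e 0| ≤ 1) (h1 : |e 1| ≤ 2) (h2 : |e 2| ≤ 4) (n : ℕ) : |e n| ≤ 2 ^ n := by
  induction n using Nat.strong_induction_on with
  | _ n ih =>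
    rcases n with _ | _ | _ | n
    · simpa using h0
    · simpa using h1
    · norm_num [h2]
    · calc |e (n + 3)| ≤ |e (n + 1)| + 2 * |e n| := by
            simpa only [hrec, abs_mul, abs_two] using abs_add_le (e (n + 1)) (2 * e n)
        _ ≤ 2 ^ (n + 1) + 2 * 2 ^ n := by gcongr <;> exact ih _ (by omega)
        _ ≤ 2 ^ (n + 3) := by ring_nf; nlinarith [pow_pos (two_pos : (0 : ℝ) < 2) n]

lemma abs_le_two_pow_of_abs_sub_le {e : ℕ → ℝ} (hstep : ∀ n, |e (n + 2) - e (n + 1)| ≤ 2 ^ (n + 1))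
    (h0 : |e 0| ≤ 1) (h1 : |e 1| ≤ 2) : ∀ n, |e n| ≤ 2 ^ n
  | 0 => by simpa using h0
  | n + 1 => by
    induction n with
    | zero => simpa using h1
    | succ n ih =>
      calc |e (n + 2)| ≤ |e (n + 1)| + |e (n + 2) - e (n + 1)| := by
            linarith [abs_sub_abs_le_abs_sub (e (n + 2)) (e (n + 1))]
        _ ≤ 2 ^ (n + 1) + 2 ^ (n + 1) := add_le_add ih (hstep n)
        _ = 2 ^ (n + 2) := by ring

lemma tendsto_div_pow_of_abs_sub_le {u : ℕ → ℝ} {c C r q : ℝ} (hr : 0 ≤ r) (hrq : r < q)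
    (h : ∀ᶠ n in atTop, |u n - c * q ^ n| ≤ C * r ^ n) :
    Tendsto (fun n => u n / q ^ n) atTop (𝓝 c) := by
  have hq : 0 < q := hr.trans_lt hrq
  rw [← tendsto_sub_nhds_zero_iff]
  refine squeeze_zero_norm' (a := fun n => C * (r / q) ^ n) ?_ ?_
  · filter_upwards [h] with n hn
    have hqn : 0 < q ^ n := pow_pos hq n
    have hdiff : u n / q ^ n - c = (u n - c * q ^ n) / q ^ n := by field_simp
    rw [Real.norm_eq_abs, hdiff, abs_div, abs_of_pos hqn, div_pow, ← mul_div_assoc]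
    gcongr
  · simpa using (tendsto_pow_atTop_nhds_zero_of_lt_one (div_nonneg hr hq.le)
      ((div_lt_one hq).mpr hrq)).const_mul C

lemma abs_S909_sub_le (S1000 S909 S727 : ℕ → ℕ) (hS : ∀ N, (S1000 N : ℝ) = (3 ^ N - 1) / 2)
    (h909_1 : S909 1 = 1) (h727_1 : S727 1 = 1) (h727_2 : S727 2 = 4)
    (h909 : ∀ N ≥ 1, S909 (N + 1) = S727 N + 2 * S1000 N + 1)
    (h727 : ∀ N ≥ 2, S727 (N + 1) = S909 N + 2 * S909 (N - 1) + 2 * S1000 (N - 1) + 3) (n : ℕ) :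
    |(S909 (n + 1) : ℝ) - 5 / 11 * 3 ^ (n + 1) + 1| ≤ 2 ^ n := by
  have step909 : ∀ N ≥ 1, (S909 (N + 1) : ℝ) = S727 N + 3 ^ N := fun N hN => by
    rw [h909 N hN]; push_cast; rw [hS]; ring
  have step727 : ∀ n, (S727 (n + 3) : ℝ) = S909 (n + 2) + 2 * S909 (n + 1) + 3 ^ (n + 1) + 2 :=
    fun n => by rw [h727 (n + 2) (by omega)]; push_cast; rw [hS]; ring
  refine abs_le_two_pow_of_recurrence (e := fun n => (S909 (n + 1) : ℝ) - 5 / 11 * 3 ^ (n + 1) + 1)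
    (fun n => ?_) ?_ ?_ ?_ n
  · simp only [step909 (n + 3) (by omega), step727]
    ring
  · norm_num [h909_1]
  · norm_num [step909 1 le_rfl, h727_1, abs_le]
  · norm_num [step909 2 (by norm_num), h727_2, abs_le]

lemma abs_S636_sub_le (S1000 S909 S636 : ℕ → ℕ) (hS : ∀ N, (S1000 N : ℝ) = (3 ^ N - 1) / 2)
    (h636_1 : S636 1 = 1) (h636_2 : S636 2 = 4)
    (h636 : ∀ N ≥ 2, S636 (N + 1) = S636 N + 2 * S909 (N - 1) + 2 * S1000 (N - 1) + 3)
    (b909 : ∀ n, |(S909 (n + 1) : ℝ) - 5 / 11 * 3 ^ (n + 1) + 1| ≤ 2 ^ n) (n : ℕ) :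
    |(S636 (n + 1) : ℝ) - 7 / 22 * 3 ^ (n + 1)| ≤ 2 ^ n := by
  refine abs_le_two_pow_of_abs_sub_le (e := fun n => (S636 (n + 1) : ℝ) - 7 / 22 * 3 ^ (n + 1))
    (fun n => ?_) ?_ ?_ n
  · have step636 : (S636 (n + 3) : ℝ) = S636 (n + 2) + 2 * S909 (n + 1) + 3 ^ (n + 1) + 2 := by
      rw [h636 (n + 2) (by omega)]; push_cast; rw [hS]; ring
    calc _ = |2 * ((S909 (n + 1) : ℝ) - 5 / 11 * 3 ^ (n + 1) + 1)| := by rw [step636]; ring_nf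
      _ ≤ 2 * 2 ^ n := by rw [abs_mul, abs_two]; gcongr; exact b909 n
      _ = 2 ^ (n + 1) := by ring
  · norm_num [h636_1, abs_le]
  · norm_num [h636_2, abs_le]

lemma abs_S606_sub_le (S1000 S909 S636 S606 : ℕ → ℕ) (hS : ∀ N, (S1000 N : ℝ) = (3 ^ N - 1) / 2)
    (h606_1 : S606 1 = 1) (h606_2 : S606 2 = 4)
    (h606 : ∀ N ≥ 2,
      S606 (N + 1) = S636 N + S636 (N - 1) + S909 (N - 1) + 2 * S1000 (N - 1) + 3)
    (b909 : ∀ n, |(S909 (n + 1) : ℝ) - 5 / 11 * 3 ^ (n + 1) + 1| ≤ 2 ^ n)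
    (b636 : ∀ n, |(S636 (n + 1) : ℝ) - 7 / 22 * 3 ^ (n + 1)| ≤ 2 ^ n) :
    ∀ n, |(S606 (n + 1) : ℝ) - 10 / 33 * 3 ^ (n + 1)| ≤ 2 ^ (n + 1)
  | 0 => by norm_num [h606_1, abs_le]
  | 1 => by norm_num [h606_2, abs_le]
  | n + 2 => by
    have step606 :
        (S606 (n + 3) : ℝ) = S636 (n + 2) + S636 (n + 1) + S909 (n + 1) + 3 ^ (n + 1) + 2 := by
      rw [h606 (n + 2) (by omega)]; push_cast; rw [hS]; ring
    calc _ = |((S636 (n + 2) : ℝ) - 7 / 22 * 3 ^ (n + 2))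
          + ((S636 (n + 1) : ℝ) - 7 / 22 * 3 ^ (n + 1))
          + ((S909 (n + 1) : ℝ) - 5 / 11 * 3 ^ (n + 1) + 1) + 1| := by rw [step606]; ring_nf
      _ ≤ 2 ^ (n + 1) + 2 ^ n + 2 ^ n + 1 := by
        grw [abs_add_le, abs_add_three, b636 (n + 1), b636 n, b909 n, abs_one]
      _ ≤ 2 ^ (n + 3) := by ring_nf; linarith [one_le_pow₀ (one_le_two : (1 : ℝ) ≤ 2) (n := n)]

theorem duration_limit_606 (S1000 S909 S727 S636 S606 : ℕ → ℕ)
    (h1000 : ∀ N, S1000 N = (3 ^ N - 1) / 2)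
    (h909_1 : S909 1 = 1) (h727_1 : S727 1 = 1) (h636_1 : S636 1 = 1)
    (h727_2 : S727 2 = 4) (h636_2 : S636 2 = 4)
    (h606_1 : S606 1 = 1) (h606_2 : S606 2 = 4)
    (h909 : ∀ N ≥ 1, S909 (N + 1) = S727 N + 2 * S1000 N + 1)
    (h727 : ∀ N ≥ 2, S727 (N + 1) = S909 N + 2 * S909 (N - 1) + 2 * S1000 (N - 1) + 3)
    (h636 : ∀ N ≥ 2, S636 (N + 1) = S636 N + 2 * S909 (N - 1) + 2 * S1000 (N - 1) + 3)
    (h606 : ∀ N ≥ 2, S606 (N + 1) = S636 N + S636 (N - 1) + S909 (N - 1) + 2 * S1000 (N - 1) + 3) :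
    Tendsto (fun N => (S606 N : ℝ) / (S1000 N : ℝ)) atTop (nhds (20 / 33)) := by
  have hS : ∀ N, (S1000 N : ℝ) = (3 ^ N - 1) / 2 := fun N => by
    rw [h1000]; exact cast_three_pow_sub_one_div_two N
  have b909 := abs_S909_sub_le S1000 S909 S727 hS h909_1 h727_1 h727_2 h909 h727
  have b636 := abs_S636_sub_le S1000 S909 S636 hS h636_1 h636_2 h636 b909
  have b606 := abs_S606_sub_le S1000 S909 S636 S606 hS h606_1 h606_2 h606 b909 b636
  have lim606 : Tendsto (fun N => (S606 N : ℝ) / 3 ^ N) atTop (𝓝 (10 / 33)) := by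
    refine tendsto_div_pow_of_abs_sub_le (C := 1) (r := 2) (by norm_num) (by norm_num) ?_
    filter_upwards [eventually_ge_atTop 1] with N hN
    obtain ⟨n, rfl⟩ := Nat.exists_eq_add_of_le' hN
    simpa using b606 n
  have lim1000 : Tendsto (fun N => (S1000 N : ℝ) / 3 ^ N) atTop (𝓝 (1 / 2)) :=
    tendsto_div_pow_of_abs_sub_le (C := 1 / 2) (r := 1) (by norm_num) (by norm_num)
      (.of_forall fun N => by
        rw [hS, show ((3 : ℝ) ^ N - 1) / 2 - 1 / 2 * 3 ^ N = -(1 / 2) by ring]; norm_num)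
  rw [show (20 / 33 : ℝ) = 10 / 33 / (1 / 2) by norm_num]
  exact (lim606.div lim1000 one_half_pos.ne').congr fun N =>
    div_div_div_cancel_right₀ (by positivity) _ _
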